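/- Let f : 𝔻 → closure(𝔻) be holomorphic with f(0) ≠ 0 and let r ∈ (0,1). Then the hyperbolic area satisfies A_h(Ω(rf)) ≥ π(1 − r)r²|f(0)|² / ((1 + r)·((1 + r)² − 4r|f(0)|²)), with equality if and only if f is a constant of modulus 1. -/

import Mathlib

open Complex Set Metric MeasureTheory ENNReal

noncomputable section

/-- `Ω(rf) = {z ∈ 𝔻 : |z| < r|f(z)|}`. -/
def OmegaR (f : ℂ → ℂ) (r : ℝ) : Set ℂ :=
  {z | z ∈ ball (0 : ℂ) 1 ∧ ‖z‖ < r * ‖f z‖}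

/-- The hyperbolic area of a subset of the unit disc. -/
def hypArea (S : Set ℂ) : ℝ≥0∞ :=
  ∫⁻ z in S, ENNReal.ofReal (((1 - ‖z‖ ^ 2) ^ 2)⁻¹)

/-- The hyperbolic length of a subset of the unit disc, via 1-dimensional
Hausdorff measure. -/
def hypLength (E : Set ℂ) : ℝ≥0∞ :=
  ∫⁻ z in E, ENNReal.ofReal ((1 - ‖z‖ ^ 2)⁻¹) ∂(μH[1])

/-!
If `|f 0| = 1`, the maximum modulus principle makes `f` a unimodular constant, `Ω(rf)` is the
disc of radius `r`, and its hyperbolic area `π r² / (1 - r²)` is exactly the bound. Otherwise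
`a = |f 0| < 1`, `f` maps `𝔻` into `𝔻`, and Schwarz–Pick gives `|f z| ≥ (a - |z|) / (1 - a|z|)`.
Hence `Ω(rf)` contains the disc of radius `ρ`, the root in `(0, r)` of `a (ρ² + r) = (1 + r) ρ`,
and the hyperbolic area `π ρ² / (1 - ρ²)` of that disc is strictly larger than the bound.
-/

theorem setIntegral_ball_fun_norm_complex (g : ℝ → ℝ) (s : ℝ) :
    ∫ z in ball (0 : ℂ) s, g ‖z‖ = 2 * Real.pi * ∫ y in Ioo 0 s, y * g y := by
  have hind : (ball (0 : ℂ) s).indicator (fun z ↦ g ‖z‖) = fun z ↦ (Iio s).indicator g ‖z‖ := by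
    ext z
    simp only [indicator, mem_ball, dist_zero_right, mem_Iio]
  have hpow : (fun y : ℝ ↦ y ^ (2 - 1) • (Iio s).indicator g y)
      = (Iio s).indicator (fun y ↦ y * g y) := by
    ext y
    by_cases hy : y < s <;> simp [indicator, hy]
  rw [← integral_indicator measurableSet_ball, hind, integral_fun_norm_addHaar volume,
    Complex.finrank_real_complex, hpow, setIntegral_indicator measurableSet_Iio, Ioi_inter_Iio]
  simp only [measureReal_def, Complex.volume_ball, ENNReal.ofReal_one, one_pow, one_mul,
    coe_toReal, NNReal.coe_real_pi, smul_eq_mul, nsmul_eq_mul, Nat.cast_ofNat]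
  ring

theorem integral_mul_inv_one_sub_sq_sq {s : ℝ} (hs0 : 0 ≤ s) (hs1 : s < 1) :
    ∫ y in Ioo 0 s, y * ((1 - y ^ 2) ^ 2)⁻¹ = s ^ 2 / (2 * (1 - s ^ 2)) := by
  have hpos : ∀ y ∈ uIcc 0 s, 0 < 1 - y ^ 2 := fun y hy ↦ by
    rw [uIcc_of_le hs0] at hy
    nlinarith [hy.1, hy.2]
  have hderiv : ∀ y ∈ uIcc 0 s, HasDerivAt (fun t ↦ t ^ 2 / (2 * (1 - t ^ 2)))
      (y * ((1 - y ^ 2) ^ 2)⁻¹) y := fun y hy ↦ by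
    refine ((hasDerivAt_pow 2 y).fun_div (((hasDerivAt_pow 2 y).const_sub 1).const_mul 2)
      (by nlinarith [hpos y hy])).congr_deriv ?_
    field_simp [(hpos y hy).ne']
    ring
  have hint : IntervalIntegrable (fun y ↦ y * ((1 - y ^ 2) ^ 2)⁻¹) volume 0 s :=
    (continuousOn_id.mul ((by fun_prop : Continuous fun y : ℝ ↦ (1 - y ^ 2) ^ 2).continuousOn.inv₀
      fun y hy ↦ (pow_pos (hpos y hy) 2).ne')).intervalIntegrable
  rw [← integral_Ioc_eq_integral_Ioo, ← intervalIntegral.integral_of_le hs0,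
    intervalIntegral.integral_eq_sub_of_hasDerivAt hderiv hint]
  simp

theorem hypArea_ball {s : ℝ} (hs0 : 0 ≤ s) (hs1 : s < 1) :
    hypArea (ball (0 : ℂ) s) = ENNReal.ofReal (Real.pi * s ^ 2 / (1 - s ^ 2)) := by
  have hcont : ContinuousOn (fun z : ℂ ↦ ((1 - ‖z‖ ^ 2) ^ 2)⁻¹) (closedBall 0 s) :=
    (by fun_prop : Continuous fun z : ℂ ↦ (1 - ‖z‖ ^ 2) ^ 2).continuousOn.inv₀ fun z hz ↦ by
      rw [mem_closedBall, dist_zero_right] at hz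
      exact pow_ne_zero 2 (by nlinarith [norm_nonneg z])
  have hint : IntegrableOn (fun z : ℂ ↦ ((1 - ‖z‖ ^ 2) ^ 2)⁻¹) (ball 0 s) :=
    (hcont.integrableOn_compact (isCompact_closedBall _ _)).mono_set ball_subset_closedBall
  rw [hypArea, ← ofReal_integral_eq_lintegral_ofReal hint (.of_forall fun z ↦ by positivity),
    setIntegral_ball_fun_norm_complex (fun y ↦ ((1 - y ^ 2) ^ 2)⁻¹),
    integral_mul_inv_one_sub_sq_sq hs0 hs1]
  congr 1
  field_simp

open ComplexConjugate

theorem norm_one_sub_conj_mul_sq_sub_norm_sub_sq (w u : ℂ) :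
    ‖1 - conj w * u‖ ^ 2 - ‖w - u‖ ^ 2 = (1 - ‖w‖ ^ 2) * (1 - ‖u‖ ^ 2) := by
  simp only [Complex.sq_norm, normSq_apply, sub_re, sub_im, one_re, one_im, mul_re, mul_im, conj_re,
    conj_im]
  ring

theorem norm_sub_lt_norm_one_sub_conj_mul {w u : ℂ} (hw : ‖w‖ < 1) (hu : ‖u‖ < 1) :
    ‖w - u‖ < ‖1 - conj w * u‖ := by
  have h := norm_one_sub_conj_mul_sq_sub_norm_sub_sq w u
  have hpos : 0 < (1 - ‖w‖ ^ 2) * (1 - ‖u‖ ^ 2) := by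
    apply _root_.mul_pos <;> nlinarith [norm_nonneg w, norm_nonneg u]
  exact lt_of_pow_lt_pow_left₀ 2 (norm_nonneg _) (by linarith)

/-- The pseudo-hyperbolic distance of `‖w‖` and `‖u‖` is at most that of `w` and `u`. -/
theorem abs_norm_sub_norm_mul_le {w u : ℂ} (hw : ‖w‖ ≤ 1) (hu : ‖u‖ ≤ 1) :
    |‖w‖ - ‖u‖| * ‖1 - conj w * u‖ ≤ ‖w - u‖ * (1 - ‖w‖ * ‖u‖) := by
  have hid := norm_one_sub_conj_mul_sq_sub_norm_sub_sq w u
  have hP : 0 ≤ (1 - ‖w‖ ^ 2) * (1 - ‖u‖ ^ 2) := by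
    apply mul_nonneg <;> nlinarith [norm_nonneg w, norm_nonneg u]
  have htri : (‖w‖ - ‖u‖) ^ 2 ≤ ‖w - u‖ ^ 2 := by
    rw [← sq_abs]
    exact pow_le_pow_left₀ (abs_nonneg _) (abs_norm_sub_norm_le w u) 2
  have hwu : 0 ≤ 1 - ‖w‖ * ‖u‖ := by nlinarith [norm_nonneg w, norm_nonneg u]
  refine (pow_le_pow_iff_left₀ (by positivity) (by positivity) two_ne_zero).1 ?_
  rw [mul_pow, mul_pow, sq_abs]
  -- both sides differ by `(1 - ‖w‖²)(1 - ‖u‖²)` times the triangle-inequality defect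
  nlinarith [mul_le_mul_of_nonneg_left htri hP]

theorem schwarz_pick {f : ℂ → ℂ} (hf : DifferentiableOn ℂ f (ball 0 1))
    (hmap : MapsTo f (ball 0 1) (ball 0 1)) {z : ℂ} (hz : z ∈ ball (0 : ℂ) 1) :
    ‖f 0 - f z‖ ≤ ‖z‖ * ‖1 - conj (f 0) * f z‖ := by
  have hnorm : ∀ ζ ∈ ball (0 : ℂ) 1, ‖f ζ‖ < 1 := fun ζ hζ ↦ mem_ball_zero_iff.1 (hmap hζ)
  have hden : ∀ ζ ∈ ball (0 : ℂ) 1, 0 < ‖1 - conj (f 0) * f ζ‖ := fun ζ hζ ↦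
    (norm_nonneg _).trans_lt
      (norm_sub_lt_norm_one_sub_conj_mul (hnorm 0 (mem_ball_self one_pos)) (hnorm ζ hζ))
  set g : ℂ → ℂ := fun ζ ↦ (f 0 - f ζ) / (1 - conj (f 0) * f ζ)
  have hg : DifferentiableOn ℂ g (ball 0 1) :=
    ((differentiableOn_const _).sub hf).div ((differentiableOn_const _).sub
      ((differentiableOn_const _).mul hf)) fun ζ hζ ↦ norm_pos_iff.1 (hden ζ hζ)
  have hgmap : MapsTo g (ball 0 1) (closedBall 0 1) := fun ζ hζ ↦ by
    rw [mem_closedBall_zero_iff, norm_div, div_le_one (hden ζ hζ)]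
    exact (norm_sub_lt_norm_one_sub_conj_mul (hnorm 0 (mem_ball_self one_pos)) (hnorm ζ hζ)).le
  have hschwarz := norm_le_norm_of_mapsTo_ball hg hgmap (by simp [g]) (mem_ball_zero_iff.1 hz)
  rwa [norm_div, div_le_iff₀ (hden z hz)] at hschwarz

theorem norm_sub_norm_le_of_mapsTo_ball {f : ℂ → ℂ} (hf : DifferentiableOn ℂ f (ball 0 1))
    (hmap : MapsTo f (ball 0 1) (ball 0 1)) {z : ℂ} (hz : z ∈ ball (0 : ℂ) 1) :
    ‖f 0‖ - ‖z‖ ≤ ‖f z‖ * (1 - ‖f 0‖ * ‖z‖) := by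
  have h0 := mem_ball_zero_iff.1 (hmap (mem_ball_self one_pos))
  have hfz := mem_ball_zero_iff.1 (hmap hz)
  have hden := (norm_nonneg _).trans_lt (norm_sub_lt_norm_one_sub_conj_mul h0 hfz)
  have hpseudo : |‖f 0‖ - ‖f z‖| ≤ ‖z‖ * (1 - ‖f 0‖ * ‖f z‖) := by
    refine le_of_mul_le_mul_right ?_ hden
    calc |‖f 0‖ - ‖f z‖| * ‖1 - conj (f 0) * f z‖
        ≤ ‖f 0 - f z‖ * (1 - ‖f 0‖ * ‖f z‖) := abs_norm_sub_norm_mul_le h0.le hfz.le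
      _ ≤ ‖z‖ * ‖1 - conj (f 0) * f z‖ * (1 - ‖f 0‖ * ‖f z‖) :=
        mul_le_mul_of_nonneg_right (schwarz_pick hf hmap hz)
          (by nlinarith [norm_nonneg (f 0), norm_nonneg (f z)])
      _ = ‖z‖ * (1 - ‖f 0‖ * ‖f z‖) * ‖1 - conj (f 0) * f z‖ := by ring
  linarith [le_abs_self (‖f 0‖ - ‖f z‖)]

theorem mapsTo_ball_or_eq_const_of_mapsTo_closedBall {f : ℂ → ℂ}
    (hf : DifferentiableOn ℂ f (ball 0 1)) (hmap : MapsTo f (ball 0 1) (closedBall 0 1)) :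
    MapsTo f (ball 0 1) (ball 0 1) ∨ ∃ σ : ℂ, ‖σ‖ = 1 ∧ ∀ z ∈ ball (0 : ℂ) 1, f z = σ := by
  refine or_iff_not_imp_left.2 fun hball ↦ ?_
  obtain ⟨c, hc, hfc⟩ := not_forall₂.1 hball
  have hnorm : ‖f c‖ = 1 :=
    le_antisymm (mem_closedBall_zero_iff.1 (hmap hc)) (not_lt.1 (mt mem_ball_zero_iff.2 hfc))
  have hmax : IsMaxOn (norm ∘ f) (ball 0 1) c := fun z hz ↦ by
    simpa [hnorm] using mem_closedBall_zero_iff.1 (hmap hz)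
  exact ⟨f c, hnorm, eqOn_of_isPreconnected_of_isMaxOn_norm (convex_ball 0 1).isPreconnected
    isOpen_ball hf hc hmax⟩

theorem OmegaR_eq_ball_of_eq_const {f : ℂ → ℂ} {σ : ℂ} {r : ℝ} (hr : r < 1) (hσ : ‖σ‖ = 1)
    (hf : ∀ z ∈ ball (0 : ℂ) 1, f z = σ) : OmegaR f r = ball 0 r := by
  ext z
  simp only [OmegaR, mem_ofPred_eq, mem_ball_zero_iff]
  refine ⟨fun ⟨hz, hzr⟩ ↦ ?_, fun hzr ↦ ?_⟩
  · rwa [hf z (mem_ball_zero_iff.2 hz), hσ, mul_one] at hzr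
  · have hz : ‖z‖ < 1 := hzr.trans hr
    rw [hf z (mem_ball_zero_iff.2 hz), hσ, mul_one]
    exact ⟨hz, hzr⟩

theorem exists_mem_Ioo_mul_sq_add_eq {r a : ℝ} (hr : 0 < r) (ha0 : 0 < a) (ha1 : a < 1) :
    ∃ ρ ∈ Ioo 0 r, a * (ρ ^ 2 + r) = (1 + r) * ρ := by
  have hcont : ContinuousOn (fun ρ : ℝ ↦ (1 + r) * ρ - a * (ρ ^ 2 + r)) (Icc 0 r) := by fun_prop
  have hsign : (0 : ℝ) ∈ Ioo ((1 + r) * 0 - a * (0 ^ 2 + r)) ((1 + r) * r - a * (r ^ 2 + r)) :=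
    ⟨by nlinarith, by nlinarith⟩
  obtain ⟨ρ, hρ, hroot⟩ := intermediate_value_Ioo hr.le hcont hsign
  exact ⟨ρ, hρ, by linarith⟩

theorem ball_subset_OmegaR {f : ℂ → ℂ} {r ρ : ℝ} (hf : DifferentiableOn ℂ f (ball 0 1))
    (hmap : MapsTo f (ball 0 1) (ball 0 1)) (hr : r < 1) (hρ : ρ ∈ Ioo 0 r)
    (hroot : ‖f 0‖ * (ρ ^ 2 + r) = (1 + r) * ρ) : ball 0 ρ ⊆ OmegaR f r := by
  intro z hz
  rw [mem_ball_zero_iff] at hz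
  have hz1 : z ∈ ball (0 : ℂ) 1 := mem_ball_zero_iff.2 (by linarith [hρ.2])
  set a := ‖f 0‖
  set t := ‖z‖
  have ha : a < 1 := mem_ball_zero_iff.1 (hmap (mem_ball_self one_pos))
  have ht : 0 ≤ t := norm_nonneg z
  have hat : 0 < 1 - a * t := by
    nlinarith [mul_le_mul_of_nonneg_right ha.le ht, hρ.2]
  have hquad : t * (1 - a * t) < r * (a - t) := by
    have hfac : r * (a - t) - t * (1 - a * t) = (ρ - t) * ((1 + r) - a * (t + ρ)) := by
      linear_combination hroot
    nlinarith [mul_pos (sub_pos.2 hz) (by nlinarith [hρ.1, hρ.2, norm_nonneg (f 0)] :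
      0 < (1 + r) - a * (t + ρ))]
  have hsp := norm_sub_norm_le_of_mapsTo_ball hf hmap hz1
  refine ⟨hz1, lt_of_mul_lt_mul_right ?_ hat.le⟩
  calc t * (1 - a * t) < r * (a - t) := hquad
    _ ≤ r * (‖f z‖ * (1 - a * t)) := mul_le_mul_of_nonneg_left hsp (by linarith [hρ.1, hρ.2])
    _ = r * ‖f z‖ * (1 - a * t) := by ring

def areaBound (r a : ℝ) : ℝ :=
  Real.pi * (1 - r) * r ^ 2 * a ^ 2 / ((1 + r) * ((1 + r) ^ 2 - 4 * r * a ^ 2))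

theorem areaBound_one (r : ℝ) : areaBound r 1 = Real.pi * r ^ 2 / (1 - r ^ 2) := by
  rcases eq_or_ne r 1 with rfl | hr
  · simp [areaBound]
  rw [areaBound, one_pow, mul_one, mul_one,
    show (1 + r) * ((1 + r) ^ 2 - 4 * r) = (1 - r ^ 2) * (1 - r) by ring,
    show Real.pi * (1 - r) * r ^ 2 = Real.pi * r ^ 2 * (1 - r) by ring,
    mul_div_mul_right _ _ (sub_ne_zero.2 hr.symm)]

theorem areaBound_eq_of_root {r a ρ : ℝ} (hρ0 : 0 < ρ) (hr : 0 < r)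
    (hroot : a * (ρ ^ 2 + r) = (1 + r) * ρ) :
    areaBound r a = Real.pi * (1 - r) * r ^ 2 * ρ ^ 2 / ((1 + r) * (r - ρ ^ 2) ^ 2) := by
  have ha : a = (1 + r) * ρ / (ρ ^ 2 + r) := by
    rw [← hroot, mul_div_cancel_right₀ _ (by positivity)]
  rw [areaBound, ha]
  field_simp
  ring

theorem areaBound_lt_of_root {r a ρ : ℝ} (hr : r < 1) (hρ : ρ ∈ Ioo 0 r)
    (hroot : a * (ρ ^ 2 + r) = (1 + r) * ρ) :
    areaBound r a < Real.pi * ρ ^ 2 / (1 - ρ ^ 2) := by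
  obtain ⟨hρ0, hρr⟩ := hρ
  have hρ2 : ρ ^ 2 < r ^ 2 := by nlinarith
  have hρ2' : ρ ^ 2 < r := by nlinarith
  rw [areaBound_eq_of_root hρ0 (hρ0.trans hρr) hroot,
    div_lt_div_iff₀ (by nlinarith [pow_pos (sub_pos.2 hρ2') 2]) (by nlinarith)]
  have hgap : 0 < (1 + r) * (r - ρ ^ 2) ^ 2 - (1 - r) * r ^ 2 * (1 - ρ ^ 2) := by
    -- expansion around `ρ² = r²`, where the gap vanishes
    have hid : (1 + r) * (r - ρ ^ 2) ^ 2 - (1 - r) * r ^ 2 * (1 - ρ ^ 2)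
        = (r ^ 2 - ρ ^ 2) * (1 - r) * r * (2 + r) + (1 + r) * (ρ ^ 2 - r ^ 2) ^ 2 := by ring
    rw [hid]
    refine add_pos_of_pos_of_nonneg ?_ (mul_nonneg (by linarith) (sq_nonneg _))
    exact mul_pos (mul_pos (mul_pos (sub_pos.2 hρ2) (sub_pos.2 hr)) (hρ0.trans hρr)) (by linarith)
  nlinarith [mul_pos (mul_pos Real.pi_pos (pow_pos hρ0 2)) hgap]

theorem areaBound_lt_hypArea_OmegaR {f : ℂ → ℂ} {r : ℝ} (hf : DifferentiableOn ℂ f (ball 0 1))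
    (hmap : MapsTo f (ball 0 1) (ball 0 1)) (hr : r ∈ Ioo 0 1) (h0 : f 0 ≠ 0) :
    ENNReal.ofReal (areaBound r ‖f 0‖) < hypArea (OmegaR f r) := by
  obtain ⟨ρ, hρ, hroot⟩ := exists_mem_Ioo_mul_sq_add_eq hr.1 (norm_pos_iff.2 h0)
    (mem_ball_zero_iff.1 (hmap (mem_ball_self one_pos)))
  have hρ1 : ρ < 1 := hρ.2.trans hr.2
  calc ENNReal.ofReal (areaBound r ‖f 0‖)
      < ENNReal.ofReal (Real.pi * ρ ^ 2 / (1 - ρ ^ 2)) :=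
        ENNReal.ofReal_lt_ofReal_iff'.2 ⟨areaBound_lt_of_root hr.2 hρ hroot,
          div_pos (by have := hρ.1; positivity) (by nlinarith [hρ.1])⟩
    _ = hypArea (ball 0 ρ) := (hypArea_ball hρ.1.le hρ1).symm
    _ ≤ hypArea (OmegaR f r) := lintegral_mono_set (ball_subset_OmegaR hf hmap hr.2 hρ hroot)

theorem stmt17 (f : ℂ → ℂ) (r : ℝ) (hr : r ∈ Ioo (0 : ℝ) 1)
    (hf : DifferentiableOn ℂ f (ball (0 : ℂ) 1))
    (hmap : MapsTo f (ball (0 : ℂ) 1) (closedBall (0 : ℂ) 1))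
    (h0 : f 0 ≠ 0) :
    ENNReal.ofReal (Real.pi * (1 - r) * r ^ 2 * ‖f 0‖ ^ 2 /
        ((1 + r) * ((1 + r) ^ 2 - 4 * r * ‖f 0‖ ^ 2)))
      ≤ hypArea (OmegaR f r) ∧
    (hypArea (OmegaR f r) =
        ENNReal.ofReal (Real.pi * (1 - r) * r ^ 2 * ‖f 0‖ ^ 2 /
          ((1 + r) * ((1 + r) ^ 2 - 4 * r * ‖f 0‖ ^ 2))) ↔
      ∃ σ : ℂ, ‖σ‖ = 1 ∧ ∀ z ∈ ball (0 : ℂ) 1, f z = σ) := by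
  rcases mapsTo_ball_or_eq_const_of_mapsTo_closedBall hf hmap with hball | ⟨σ, hσ, hconst⟩
  · have hlt := areaBound_lt_hypArea_OmegaR hf hball hr h0
    refine ⟨hlt.le, iff_of_false hlt.ne' ?_⟩
    rintro ⟨σ, hσ, hconst⟩
    have h1 := mem_ball_zero_iff.1 (hball (mem_ball_self one_pos))
    rw [hconst 0 (mem_ball_self one_pos), hσ] at h1
    exact lt_irrefl 1 h1
  · have harea : hypArea (OmegaR f r) = ENNReal.ofReal (areaBound r ‖f 0‖) := by
      rw [OmegaR_eq_ball_of_eq_const hr.2 hσ hconst, hypArea_ball hr.1.le hr.2,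
        hconst 0 (mem_ball_self one_pos), hσ, areaBound_one]
    exact ⟨harea.ge, iff_of_true harea ⟨σ, hσ, hconst⟩⟩
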